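/- Let Ω ⊆ ℝⁿ be open, let φ : Ω → ℝ be twice continuously differentiable, let ξ > 0 and γ₀ > 0, and let V : Ω → ℝⁿ be a continuously differentiable vector field with compact support in Ω. Define T_{ij} := γ₀ [ ((ξ/2)|∇φ|² + W(φ)/ξ) δ_{ij} − ξ (∂_i φ)(∂_j φ) ]. Then ∫_Ω γ₀ ( −ξ Δφ + W'(φ)/ξ ) (∇φ · V) dx = − ∫_Ω T : ∇V dx, where T : ∇V := ∑_{i,j} T_{ij} ∂_j V_i. -/

import Mathlib

open MeasureTheory Filter Topology

/-- The quartic double-well potential `W(s) = 18 s² (1-s)²`. -/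
noncomputable def W (s : ℝ) : ℝ := 18 * s ^ 2 * (1 - s) ^ 2

/-- Its derivative `W'(s) = 36 s (1-s)(1-2s)`. -/
noncomputable def W' (s : ℝ) : ℝ := 36 * s * (1 - s) * (1 - 2 * s)

/-- The partial derivative `∂_i f` of a scalar field on `ℝⁿ`. -/
noncomputable def pd {n : ℕ} (f : EuclideanSpace ℝ (Fin n) → ℝ) (i : Fin n)
    (x : EuclideanSpace ℝ (Fin n)) : ℝ :=
  fderiv ℝ f x (EuclideanSpace.single i 1)

/-- The surface stress tensor
`T_{ij} = γ₀ [ ((ξ/2)|∇φ|² + W(φ)/ξ) δ_{ij} − ξ (∂_i φ)(∂_j φ) ]`. -/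
noncomputable def Tsur {n : ℕ} (γ₀ ξ : ℝ) (φ : EuclideanSpace ℝ (Fin n) → ℝ)
    (i j : Fin n) (x : EuclideanSpace ℝ (Fin n)) : ℝ :=
  γ₀ * ((ξ / 2 * ∑ l, (pd φ l x) ^ 2 + W (φ x) / ξ) * (if i = j then 1 else 0)
    - ξ * pd φ i x * pd φ j x)

/-!
Put `G_j = ∑_i T_{ij} V_i`. Since `V` vanishes near `∂Ω`, `G` is a compactly supported `C¹` field
on all of `ℝⁿ`, so `∫ div G = 0`, while the product rule gives `div G = (div T) · V + T : ∇V`.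
The stress tensor is balanced by the chemical potential,
`∑_j ∂_j T_{ij} = γ₀ (−ξ Δφ + W'(φ)/ξ) ∂_i φ`: the `δ_{ij}` part contributes
`γ₀ (ξ ∑_l ∂_l φ ∂_i ∂_l φ + W'(φ) ∂_i φ / ξ)`, and by the symmetry of second derivatives its
first term cancels the term `ξ ∑_j ∂_j ∂_i φ ∂_j φ` of `ξ ∑_j ∂_j (∂_i φ ∂_j φ)`.
-/

open Set Function

section Support

variable {𝕜 E F : Type*} [NontriviallyNormedField 𝕜] [NormedAddCommGroup E] [NormedSpace 𝕜 E]
  [NormedAddCommGroup F] [NormedSpace 𝕜 F]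

theorem ContDiffOn.contDiff_of_tsupport_subset {k : WithTop ℕ∞} {f : E → F} {s : Set E}
    (hf : ContDiffOn 𝕜 k f s) (hs : IsOpen s) (hfs : tsupport f ⊆ s) : ContDiff 𝕜 k f := by
  refine contDiff_iff_contDiffAt.2 fun x => ?_
  by_cases hx : x ∈ s
  · exact hf.contDiffAt (hs.mem_nhds hx)
  · exact contDiffAt_const.congr_of_eventuallyEq
      (notMem_tsupport_iff_eventuallyEq.1 fun h => hx (hfs h))

end Support

theorem ContinuousOn.integrable_of_support_subset_isCompact {X F : Type*} [TopologicalSpace X]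
    [T2Space X] [MeasurableSpace X] [OpensMeasurableSpace X] {μ : Measure X}
    [IsFiniteMeasureOnCompacts μ] [NormedAddCommGroup F] {f : X → F} {K : Set X}
    (hf : ContinuousOn f K) (hK : IsCompact K) (hfK : support f ⊆ K) : Integrable f μ :=
  (integrableOn_iff_integrable_of_support_subset hfK).1 (hf.integrableOn_compact hK)

section IntegralDeriv

variable {E F : Type*} [NormedAddCommGroup E] [NormedSpace ℝ E] [FiniteDimensional ℝ E]
  [MeasurableSpace E] [BorelSpace E] {μ : Measure E} [Measure.IsAddHaarMeasure μ]
  [NormedAddCommGroup F] [NormedSpace ℝ F]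

theorem integral_fderiv_apply_eq_zero {f : E → F} (hf : ContDiff ℝ 1 f)
    (hfc : HasCompactSupport f) (v : E) : ∫ x, fderiv ℝ f x v ∂μ = 0 := by
  have hf' : Continuous fun x => fderiv ℝ f x v :=
    (hf.continuous_fderiv one_ne_zero).clm_apply continuous_const
  have hf'c : HasCompactSupport fun x => fderiv ℝ f x v := hfc.fderiv_apply ℝ v
  simpa using integral_smul_fderiv_eq_neg_fderiv_smul_of_integrable (μ := μ)
    (f := fun _ => (1 : ℝ)) (g := f) (v := v) (by simp)
    (by simpa using hf'.integrable_of_hasCompactSupport hf'c)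
    (by simpa using hf.continuous.integrable_of_hasCompactSupport hfc)
    (fun _ _ => differentiableAt_const _) (fun x _ => hf.differentiable one_ne_zero x)

end IntegralDeriv

theorem hasDerivAt_W (s : ℝ) : HasDerivAt W (W' s) s := by
  have h := ((hasDerivAt_pow 2 s).const_mul (18 : ℝ)).fun_mul
    (((hasDerivAt_id s).const_sub 1).fun_pow 2)
  exact h.congr_deriv (by simp only [W', id]; ring)

section PartialDerivatives

variable {n : ℕ} {f g : EuclideanSpace ℝ (Fin n) → ℝ} {x : EuclideanSpace ℝ (Fin n)} {i : Fin n}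

theorem pd_add (hf : DifferentiableAt ℝ f x) (hg : DifferentiableAt ℝ g x) :
    pd (fun y => f y + g y) i x = pd f i x + pd g i x := by
  simp [pd, fderiv_fun_add hf hg]

theorem pd_sub (hf : DifferentiableAt ℝ f x) (hg : DifferentiableAt ℝ g x) :
    pd (fun y => f y - g y) i x = pd f i x - pd g i x := by
  simp [pd, fderiv_fun_sub hf hg]

theorem pd_mul (hf : DifferentiableAt ℝ f x) (hg : DifferentiableAt ℝ g x) :
    pd (fun y => f y * g y) i x = pd f i x * g x + f x * pd g i x := by
  simp [pd, fderiv_fun_mul hf hg]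
  ring

theorem pd_const_mul (c : ℝ) (hf : DifferentiableAt ℝ f x) :
    pd (fun y => c * f y) i x = c * pd f i x := by
  simp only [pd]
  rw [fderiv_const_mul hf]
  simp

theorem pd_mul_const (c : ℝ) (hf : DifferentiableAt ℝ f x) :
    pd (fun y => f y * c) i x = pd f i x * c := by
  simp only [pd]
  rw [fderiv_mul_const hf]
  simp [mul_comm]

theorem pd_div_const (c : ℝ) (hf : DifferentiableAt ℝ f x) :
    pd (fun y => f y / c) i x = pd f i x / c := by
  simp only [div_eq_mul_inv]
  exact pd_mul_const _ hf

theorem pd_sum {ι : Type*} (s : Finset ι) {F : ι → EuclideanSpace ℝ (Fin n) → ℝ}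
    (hF : ∀ l ∈ s, DifferentiableAt ℝ (F l) x) :
    pd (fun y => ∑ l ∈ s, F l y) i x = ∑ l ∈ s, pd (F l) i x := by
  simp [pd, fderiv_fun_sum hF]

theorem pd_comp {h : ℝ → ℝ} {h' : ℝ} (hh : HasDerivAt h h' (f x)) (hf : DifferentiableAt ℝ f x) :
    pd (fun y => h (f y)) i x = h' * pd f i x := by
  have hc : HasFDerivAt (fun y => h (f y)) (h' • fderiv ℝ f x) x :=
    hh.comp_hasFDerivAt x hf.hasFDerivAt
  simp [pd, hc.fderiv]

theorem pd_of_notMem_tsupport (hx : x ∉ tsupport f) : pd f i x = 0 := by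
  simp [pd, fderiv_of_notMem_tsupport ℝ hx]

theorem ContDiffOn.pd {s : Set (EuclideanSpace ℝ (Fin n))} {k m : WithTop ℕ∞}
    (hf : ContDiffOn ℝ m f s) (hs : IsOpen s) (hkm : k + 1 ≤ m) (i : Fin n) :
    ContDiffOn ℝ k (pd f i) s :=
  (hf.fderiv_of_isOpen hs hkm).clm_apply contDiffOn_const

theorem ContDiffAt.pd {k m : WithTop ℕ∞} (hf : ContDiffAt ℝ m f x) (hkm : k + 1 ≤ m) (i : Fin n) :
    ContDiffAt ℝ k (pd f i) x :=
  (hf.fderiv_right hkm).clm_apply contDiffAt_const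

theorem pd_pd_comm (hf : ContDiffAt ℝ 2 f x) (l m : Fin n) :
    pd (pd f l) m x = pd (pd f m) l x := by
  have hdf : DifferentiableAt ℝ (fderiv ℝ f) x :=
    (hf.fderiv_right (m := 1) le_rfl).differentiableAt one_ne_zero
  have hpd : ∀ a b : Fin n, pd (pd f a) b x =
      fderiv ℝ (fderiv ℝ f) x (EuclideanSpace.single b 1) (EuclideanSpace.single a 1) := by
    intro a b
    have hpdf : pd f a = fun y => fderiv ℝ f y (EuclideanSpace.single a 1) := rfl
    simp [pd, hpdf, fderiv_clm_apply hdf (differentiableAt_const _)]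
  rw [hpd, hpd]
  exact hf.isSymmSndFDerivAt (by simp) _ _

end PartialDerivatives

section Stress

variable {n : ℕ} {φ : EuclideanSpace ℝ (Fin n) → ℝ} {x : EuclideanSpace ℝ (Fin n)}

theorem contDiffAt_Tsur (hφ : ContDiffAt ℝ 2 φ x) (γ₀ ξ : ℝ) (i j : Fin n) :
    ContDiffAt ℝ 1 (Tsur γ₀ ξ φ i j) x := by
  have hp : ∀ l, ContDiffAt ℝ 1 (pd φ l) x := hφ.pd le_rfl
  have hW : ContDiff ℝ 1 W := by unfold W; fun_prop
  have hφ1 : ContDiffAt ℝ 1 φ x := hφ.of_le one_le_two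
  unfold Tsur
  fun_prop

theorem pd_Tsur (hφ : ContDiffAt ℝ 2 φ x) (γ₀ ξ : ℝ) (i j m : Fin n) :
    pd (Tsur γ₀ ξ φ i j) m x
      = γ₀ * ((ξ * ∑ l, pd φ l x * pd (pd φ l) m x + W' (φ x) * pd φ m x / ξ)
          * (if i = j then 1 else 0)
        - ξ * (pd (pd φ i) m x * pd φ j x + pd φ i x * pd (pd φ j) m x)) := by
  have dφ : DifferentiableAt ℝ φ x := hφ.differentiableAt two_ne_zero
  have dp : ∀ l, DifferentiableAt ℝ (pd φ l) x := fun l =>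
    (hφ.pd le_rfl l).differentiableAt one_ne_zero
  have dW : DifferentiableAt ℝ (fun y => W (φ y)) x :=
    ((hasDerivAt_W (φ x)).differentiableAt).comp x dφ
  have hsq : pd (fun y => ∑ l, pd φ l y ^ 2) m x = 2 * ∑ l, pd φ l x * pd (pd φ l) m x := by
    rw [pd_sum (F := fun l y => pd φ l y ^ 2) _ fun l _ => (dp l).fun_pow 2, Finset.mul_sum]
    refine Finset.sum_congr rfl fun l _ => ?_
    rw [pd_comp (h := fun t => t ^ 2) (hasDerivAt_pow 2 _) (dp l)]
    ring
  unfold Tsur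
  rw [pd_const_mul _ (by fun_prop), pd_sub (by fun_prop) (by fun_prop),
    pd_mul_const _ (by fun_prop), pd_add (by fun_prop) (by fun_prop), pd_const_mul _ (by fun_prop),
    hsq, pd_div_const _ dW, pd_comp (hasDerivAt_W _) dφ,
    pd_mul (by fun_prop) (dp j), pd_const_mul _ (dp i)]
  ring

theorem sum_pd_Tsur (hφ : ContDiffAt ℝ 2 φ x) (γ₀ ξ : ℝ) (i : Fin n) :
    ∑ j, pd (Tsur γ₀ ξ φ i j) j x
      = γ₀ * (-ξ * ∑ j, pd (pd φ j) j x + W' (φ x) / ξ) * pd φ i x := by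
  have hsymm : ∑ l, pd φ l x * pd (pd φ l) i x = ∑ j, pd (pd φ i) j x * pd φ j x :=
    Finset.sum_congr rfl fun l _ => by rw [pd_pd_comm hφ l i, mul_comm]
  simp only [pd_Tsur hφ, ← Finset.mul_sum, Finset.sum_sub_distrib, mul_ite, mul_one, mul_zero,
    Finset.sum_ite_eq, Finset.mem_univ, if_true, Finset.sum_add_distrib]
  rw [hsymm]
  ring

end Stress

section IntegrationByParts

variable {n : ℕ}

theorem ContDiff.continuous_pd {f : EuclideanSpace ℝ (Fin n) → ℝ} (hf : ContDiff ℝ 1 f)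
    (i : Fin n) : Continuous (pd f i) :=
  (hf.continuous_fderiv one_ne_zero).clm_apply continuous_const

theorem integral_sum_pd_eq_zero {G : Fin n → EuclideanSpace ℝ (Fin n) → ℝ}
    (hG : ∀ j, ContDiff ℝ 1 (G j)) (hGc : ∀ j, HasCompactSupport (G j)) :
    ∫ x, ∑ j, pd (G j) j x = 0 := by
  rw [integral_finsetSum _ fun j _ => ((hG j).continuous_pd j).integrable_of_hasCompactSupport
    ((hGc j).fderiv_apply ℝ _)]
  exact Finset.sum_eq_zero fun j _ => integral_fderiv_apply_eq_zero (hG j) (hGc j) _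

theorem sum_pd_sum_mul {x : EuclideanSpace ℝ (Fin n)}
    {T : Fin n → Fin n → EuclideanSpace ℝ (Fin n) → ℝ} {v : Fin n → EuclideanSpace ℝ (Fin n) → ℝ}
    (hT : ∀ i j, DifferentiableAt ℝ (T i j) x) (hv : ∀ i, DifferentiableAt ℝ (v i) x) :
    ∑ j, pd (fun y => ∑ i, T i j y * v i y) j x
      = ∑ i, (∑ j, pd (T i j) j x) * v i x + ∑ i, ∑ j, T i j x * pd (v i) j x := by
  rw [Finset.sum_congr rfl fun j _ => pd_sum (F := fun i y => T i j y * v i y) _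
    fun i _ => (hT i j).mul (hv i)]
  simp only [pd_mul (hT _ _) (hv _), Finset.sum_add_distrib, Finset.sum_mul]
  congr 1 <;> exact Finset.sum_comm

theorem setIntegral_sum_pd_mul_eq_neg_sum_mul_pd {Ω K : Set (EuclideanSpace ℝ (Fin n))}
    (hΩ : IsOpen Ω) (hK : IsCompact K) (hKΩ : K ⊆ Ω)
    {T : Fin n → Fin n → EuclideanSpace ℝ (Fin n) → ℝ} (hT : ∀ i j, ContDiffOn ℝ 1 (T i j) Ω)
    {v : Fin n → EuclideanSpace ℝ (Fin n) → ℝ} (hv : ∀ i, ContDiff ℝ 1 (v i))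
    (hvK : ∀ i, tsupport (v i) ⊆ K) :
    ∫ x in Ω, ∑ i, (∑ j, pd (T i j) j x) * v i x
      = -∫ x in Ω, ∑ i, ∑ j, T i j x * pd (v i) j x := by
  set A := fun x => ∑ i, (∑ j, pd (T i j) j x) * v i x
  set B := fun x => ∑ i, ∑ j, T i j x * pd (v i) j x
  set G := fun j y => ∑ i, T i j y * v i y
  have hv0 : ∀ i, ∀ x ∉ K, v i x = 0 := fun i x hx =>
    image_eq_zero_of_notMem_tsupport fun h => hx (hvK i h)
  have hpdv0 : ∀ i j, ∀ x ∉ K, pd (v i) j x = 0 := fun i j x hx =>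
    pd_of_notMem_tsupport fun h => hx (hvK i h)
  have hGK : ∀ j, tsupport (G j) ⊆ K := fun j =>
    closure_minimal (support_subset_iff'.2 fun x hx => by simp [G, hv0 _ x hx]) hK.isClosed
  have hGdiff : ∀ j, ContDiff ℝ 1 (G j) := fun j =>
    (ContDiffOn.sum fun i _ => (hT i j).mul (hv i).contDiffOn).contDiff_of_tsupport_subset hΩ
      ((hGK j).trans hKΩ)
  have hdiv : EqOn (fun x => A x + B x) (fun x => ∑ j, pd (G j) j x) Ω := fun x hx =>
    (sum_pd_sum_mul (fun i j => ((hT i j).differentiableOn one_ne_zero).differentiableAt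
      (hΩ.mem_nhds hx)) fun i => (hv i).differentiable one_ne_zero x).symm
  have hdivΩ : ∀ x ∉ Ω, ∑ j, pd (G j) j x = 0 := fun x hx =>
    Finset.sum_eq_zero fun j _ => pd_of_notMem_tsupport fun h => hx (hKΩ (hGK j h))
  have hA : Integrable A := by
    refine ContinuousOn.integrable_of_support_subset_isCompact ?_ hK
      (support_subset_iff'.2 fun x hx => by simp [A, hv0 _ x hx])
    exact continuousOn_finsetSum _ fun i _ => (continuousOn_finsetSum _ fun j _ =>
      ((hT i j).pd (k := 0) hΩ (by simp) j).continuousOn.mono hKΩ).mul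
        (hv i).continuous.continuousOn
  have hB : Integrable B := by
    refine ContinuousOn.integrable_of_support_subset_isCompact ?_ hK
      (support_subset_iff'.2 fun x hx => by simp [B, hpdv0 _ _ x hx])
    exact continuousOn_finsetSum _ fun i _ => continuousOn_finsetSum _ fun j _ =>
      ((hT i j).continuousOn.mono hKΩ).mul ((hv i).continuous_pd j).continuousOn
  rw [eq_neg_iff_add_eq_zero]
  calc (∫ x in Ω, A x) + ∫ x in Ω, B x
      = ∫ x in Ω, A x + B x := (integral_add hA.integrableOn hB.integrableOn).symm
    _ = ∫ x in Ω, ∑ j, pd (G j) j x := setIntegral_congr_fun hΩ.measurableSet hdiv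
    _ = ∫ x, ∑ j, pd (G j) j x := setIntegral_eq_integral_of_forall_compl_eq_zero hdivΩ
    _ = 0 := integral_sum_pd_eq_zero hGdiff fun j =>
        hK.of_isClosed_subset (isClosed_tsupport _) (hGK j)

end IntegrationByParts

theorem surface_stress_integration_by_parts_general {n : ℕ}
    (Ω : Set (EuclideanSpace ℝ (Fin n))) (hΩ : IsOpen Ω)
    (φ : EuclideanSpace ℝ (Fin n) → ℝ) (hφ : ContDiffOn ℝ 2 φ Ω)
    (ξ γ₀ : ℝ)
    (V : EuclideanSpace ℝ (Fin n) → EuclideanSpace ℝ (Fin n))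
    (hV : ContDiff ℝ 1 V) (hVcpt : HasCompactSupport V) (hVsupp : tsupport V ⊆ Ω) :
    ∫ x in Ω, γ₀ * (-ξ * (∑ j, pd (pd φ j) j x) + W' (φ x) / ξ)
        * (∑ i, pd φ i x * V x i)
      = -∫ x in Ω, ∑ i, ∑ j, Tsur γ₀ ξ φ i j x * pd (fun y => V y i) j x := by
  have hφx : ∀ x ∈ Ω, ContDiffAt ℝ 2 φ x := fun x hx => hφ.contDiffAt (hΩ.mem_nhds hx)
  have hT : ∀ i j, ContDiffOn ℝ 1 (Tsur γ₀ ξ φ i j) Ω := fun i j x hx =>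
    (contDiffAt_Tsur (hφx x hx) γ₀ ξ i j).contDiffWithinAt
  calc ∫ x in Ω, γ₀ * (-ξ * (∑ j, pd (pd φ j) j x) + W' (φ x) / ξ) * (∑ i, pd φ i x * V x i)
      = ∫ x in Ω, ∑ i, (∑ j, pd (Tsur γ₀ ξ φ i j) j x) * V x i :=
        setIntegral_congr_fun hΩ.measurableSet fun x hx => by
          simp only [sum_pd_Tsur (hφx x hx), Finset.mul_sum, mul_assoc]
    _ = -∫ x in Ω, ∑ i, ∑ j, Tsur γ₀ ξ φ i j x * pd (fun y => V y i) j x :=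
        setIntegral_sum_pd_mul_eq_neg_sum_mul_pd hΩ hVcpt hVsupp hT
          (fun i => (EuclideanSpace.proj (𝕜 := ℝ) i).contDiff.comp hV)
          fun i => tsupport_comp_subset (g := fun w : EuclideanSpace ℝ (Fin n) => w i) rfl V

/-- `∫_Ω γ₀ (−ξΔφ + W'(φ)/ξ) (∇φ · V) dx = − ∫_Ω T : ∇V dx` for compactly supported C¹ `V`. -/
theorem surface_stress_integration_by_parts {n : ℕ}
    (Ω : Set (EuclideanSpace ℝ (Fin n))) (hΩ : IsOpen Ω)
    (φ : EuclideanSpace ℝ (Fin n) → ℝ) (hφ : ContDiffOn ℝ 2 φ Ω)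
    (ξ γ₀ : ℝ) (hξ : 0 < ξ) (hγ : 0 < γ₀)
    (V : EuclideanSpace ℝ (Fin n) → EuclideanSpace ℝ (Fin n))
    (hV : ContDiff ℝ 1 V) (hVcpt : HasCompactSupport V) (hVsupp : tsupport V ⊆ Ω) :
    ∫ x in Ω, γ₀ * (-ξ * (∑ j, pd (pd φ j) j x) + W' (φ x) / ξ)
        * (∑ i, pd φ i x * V x i)
      = -∫ x in Ω, ∑ i, ∑ j, Tsur γ₀ ξ φ i j x * pd (fun y => V y i) j x :=
  surface_stress_integration_by_parts_general Ω hΩ φ hφ ξ γ₀ V hV hVcpt hVsupp
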